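/- arXiv:1405.4504 — 3 statements merged into one kernel-verified Lean document; each statement's English description precedes it below -/
import Mathlib

section
/- Let h, η : (−b,b)^d → H^d be two measurable bandwidth functions taking values in the countable set H^d, H = {e^{−s−2} : s ∈ ℕ}, and for κ ∈ (0,1/d), 𝔏 > 0 define H_d(κ,𝔏) as the set of such functions h with Σ_{s∈ℕ^d} ν_d(Λ_s[h])^κ ≤ 𝔏, where Λ_s[h] = {x : h_j(x) = e^{−s_j−2} for all j}. If h, η ∈ H_d(κ,𝔏), then the coordinatewise maximum h ∨ η belongs to H_d(dκ, (2𝔏)^d). -/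
/-!
On every level set of `h ∨ η` each coordinate of `h ∨ η` equals the corresponding coordinate of
`h` or of `η`, so `ν(Λ_s[h ∨ η])^{dκ}` is bounded by a product over `j` of one-dimensional
terms depending only on `s_j`. Summing over `s` the bound factorizes into a product of `d`
one-dimensional sums, and each of these is at most `2𝔏`: since `t ↦ t^κ` is subadditive for
`κ ≤ 1`, the `κ`-sum over the level sets of a single coordinate `h_j` is dominated by the
`κ`-sum over the level sets `Λ_s[h]`, which partition them.
-/

open MeasureTheory
open scoped ENNReal

namespace ENNReal

theorem rpow_tsum_le_tsum_rpow {ι : Type*} (a : ι → ℝ≥0∞) {p : ℝ} (hp0 : 0 < p) (hp1 : p ≤ 1) :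
    (∑' i, a i) ^ p ≤ ∑' i, a i ^ p := by
  have rpow_sum_le (F : Finset ι) : (∑ i ∈ F, a i) ^ p ≤ ∑ i ∈ F, a i ^ p := by
    classical
    induction F using Finset.induction_on with
    | empty => simp [ENNReal.zero_rpow_of_pos hp0]
    | insert i F hi ih =>
      rw [Finset.sum_insert hi, Finset.sum_insert hi]
      exact (rpow_add_le_add_rpow _ _ hp0.le hp1).trans (add_le_add_right ih _)
  rw [← ENNReal.le_rpow_inv_iff hp0, ENNReal.tsum_eq_iSup_sum]
  refine iSup_le fun F => ?_
  rw [ENNReal.le_rpow_inv_iff hp0]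
  exact (rpow_sum_le F).trans (ENNReal.sum_le_tsum F)

theorem tsum_pi_prod {ι β : Type*} [Fintype ι] (g : ι → β → ℝ≥0∞) :
    ∑' s : ι → β, ∏ i, g i (s i) = ∏ i, ∑' t, g i t := by
  refine Fintype.induction_empty_option
    (P := fun ι _ => ∀ g : ι → β → ℝ≥0∞, ∑' s : ι → β, ∏ i, g i (s i) = ∏ i, ∑' t, g i t)
    ?_ ?_ ?_ ι g
  · intro ι ι' _ e ih g
    let := Fintype.ofEquiv ι' e.symm
    rw [← (e.arrowCongr (Equiv.refl β)).tsum_eq, ← Fintype.prod_equiv e _ _ fun _ => rfl]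
    convert ih (fun i => g (e i)) using 3 with s
    exact (Fintype.prod_equiv e _ _ fun i => by simp).symm
  · intro g
    simp
  · intro ι _ ih g
    rw [← (Equiv.piOptionEquivProd (β := fun _ => β)).symm.tsum_eq, Fintype.prod_option,
      ENNReal.tsum_prod', ← ih, ← ENNReal.tsum_mul_right]
    simp [Fintype.prod_option, ENNReal.tsum_mul_left]

theorem rpow_card_mul_le_prod {ι : Type*} [Fintype ι] {a : ℝ≥0∞} {c : ι → ℝ≥0∞}
    {p : ℝ} (hp : 0 ≤ p) (h : ∀ i, a ≤ c i) : a ^ (Fintype.card ι * p) ≤ ∏ i, c i ^ p := by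
  rw [mul_comm, ENNReal.rpow_mul, ENNReal.rpow_natCast, ← Finset.card_univ, ← Finset.prod_const]
  exact Finset.prod_le_prod' fun i _ => ENNReal.rpow_le_rpow (h i) hp

end ENNReal

section LevelSets

variable {α ι β γ : Type*}

/-- The paper's `Λ_s[F]`, with the grid `H` encoded by `e` (for the theorem, `e t = e^{-t-2}`). -/
def levelSet (S : Set α) (e : γ → β) (F : α → ι → β) (s : ι → γ) : Set α :=
  {x | x ∈ S ∧ ∀ j, F x j = e (s j)}

def coordLevelSet (S : Set α) (e : γ → β) (F : α → ι → β) (j : ι) (t : γ) : Set α :=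
  {x | x ∈ S ∧ F x j = e t}

variable {S : Set α} {e : γ → β}

theorem levelSet_max_subset [LinearOrder β] (F G : α → ι → β) (s : ι → γ) (j : ι) :
    levelSet S e (fun x i => max (F x i) (G x i)) s ⊆
      coordLevelSet S e F j (s j) ∪ coordLevelSet S e G j (s j) := by
  rintro x ⟨hxS, hx⟩
  rcases max_choice (F x j) (G x j) with hmax | hmax
  · exact Or.inl ⟨hxS, hmax ▸ hx j⟩
  · exact Or.inr ⟨hxS, hmax ▸ hx j⟩

theorem coordLevelSet_eq_iUnion (he : Function.Injective e) {F : α → ι → β}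
    (hF : ∀ x ∈ S, ∀ j, ∃ t, F x j = e t) (j : ι) (t : γ) :
    coordLevelSet S e F j t = ⋃ s : (fun s : ι → γ => s j) ⁻¹' {t}, levelSet S e F s := by
  ext x
  simp only [coordLevelSet, levelSet, Set.mem_iUnion, Set.mem_ofPred_eq, Subtype.exists,
    Set.mem_preimage, Set.mem_singleton_iff, exists_prop]
  constructor
  · rintro ⟨hxS, hxj⟩
    choose s hs using hF x hxS
    exact ⟨s, he ((hs j).symm.trans hxj), hxS, hs⟩
  · rintro ⟨s, rfl, hxS, hs⟩
    exact ⟨hxS, hs j⟩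

variable [MeasurableSpace α] (μ : Measure α)

theorem tsum_measure_coordLevelSet_rpow_le [Finite ι] [Countable γ] (he : Function.Injective e)
    {F : α → ι → β} (hF : ∀ x ∈ S, ∀ j, ∃ t, F x j = e t) {κ : ℝ} (hκ0 : 0 < κ) (hκ1 : κ ≤ 1)
    (j : ι) :
    ∑' t, μ (coordLevelSet S e F j t) ^ κ ≤ ∑' s, μ (levelSet S e F s) ^ κ := by
  calc ∑' t, μ (coordLevelSet S e F j t) ^ κ
      ≤ ∑' t, (∑' s : (fun s : ι → γ => s j) ⁻¹' {t}, μ (levelSet S e F s)) ^ κ := by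
        refine ENNReal.tsum_le_tsum fun t => ENNReal.rpow_le_rpow ?_ hκ0.le
        rw [coordLevelSet_eq_iUnion he hF]
        exact measure_iUnion_le _
    _ ≤ ∑' t, ∑' s : (fun s : ι → γ => s j) ⁻¹' {t}, μ (levelSet S e F s) ^ κ :=
        ENNReal.tsum_le_tsum fun t => ENNReal.rpow_tsum_le_tsum_rpow _ hκ0 hκ1
    _ = ∑' s, μ (levelSet S e F s) ^ κ :=
        ENNReal.tsum_fiberwise (fun s => μ (levelSet S e F s) ^ κ) (fun s => s j)

theorem measure_levelSet_max_rpow_le [Fintype ι] [LinearOrder β] (F G : α → ι → β) {κ : ℝ}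
    (hκ0 : 0 ≤ κ) (hκ1 : κ ≤ 1) (s : ι → γ) :
    μ (levelSet S e (fun x i => max (F x i) (G x i)) s) ^ (Fintype.card ι * κ) ≤
      ∏ j, (μ (coordLevelSet S e F j (s j)) ^ κ + μ (coordLevelSet S e G j (s j)) ^ κ) := by
  refine (ENNReal.rpow_card_mul_le_prod hκ0 fun j => ?_).trans <|
    Finset.prod_le_prod' fun j _ => ENNReal.rpow_add_le_add_rpow _ _ hκ0 hκ1
  exact (measure_mono (levelSet_max_subset F G s j)).trans (measure_union_le _ _)

theorem tsum_measure_levelSet_max_rpow_le [Fintype ι] [Countable γ] [LinearOrder β]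
    (he : Function.Injective e) {F G : α → ι → β} (hF : ∀ x ∈ S, ∀ j, ∃ t, F x j = e t)
    (hG : ∀ x ∈ S, ∀ j, ∃ t, G x j = e t) {κ : ℝ} (hκ0 : 0 < κ) (hκ1 : κ ≤ 1)
    {L₁ L₂ : ℝ≥0∞} (hFL : ∑' s, μ (levelSet S e F s) ^ κ ≤ L₁)
    (hGL : ∑' s, μ (levelSet S e G s) ^ κ ≤ L₂) :
    ∑' s, μ (levelSet S e (fun x i => max (F x i) (G x i)) s) ^ (Fintype.card ι * κ) ≤
      (L₁ + L₂) ^ Fintype.card ι := by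
  calc ∑' s, μ (levelSet S e (fun x i => max (F x i) (G x i)) s) ^ (Fintype.card ι * κ)
      ≤ ∑' s : ι → γ, ∏ j,
          (μ (coordLevelSet S e F j (s j)) ^ κ + μ (coordLevelSet S e G j (s j)) ^ κ) :=
        ENNReal.tsum_le_tsum (measure_levelSet_max_rpow_le μ F G hκ0.le hκ1)
    _ = ∏ j, ∑' t, (μ (coordLevelSet S e F j t) ^ κ + μ (coordLevelSet S e G j t) ^ κ) :=
        ENNReal.tsum_pi_prod fun j t =>
          μ (coordLevelSet S e F j t) ^ κ + μ (coordLevelSet S e G j t) ^ κ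
    _ ≤ ∏ _j : ι, (L₁ + L₂) := by
        refine Finset.prod_le_prod' fun j _ => ?_
        rw [ENNReal.tsum_add]
        exact add_le_add ((tsum_measure_coordLevelSet_rpow_le μ he hF hκ0 hκ1 j).trans hFL)
          ((tsum_measure_coordLevelSet_rpow_le μ he hG hκ0 hκ1 j).trans hGL)
    _ = (L₁ + L₂) ^ Fintype.card ι := by rw [Finset.prod_const, Finset.card_univ]

end LevelSets

theorem stmt_4_general (d : ℕ) (b κ 𝔏 : ℝ)
    (hκ : κ ∈ Set.Ioo (0 : ℝ) (1 / d)) (h𝔏 : 0 < 𝔏)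
    (h η : (Fin d → ℝ) → Fin d → ℝ)
    (hhH : ∀ x ∈ Set.univ.pi fun _ : Fin d => Set.Ioo (-b) b,
      ∀ j, ∃ s : ℕ, h x j = Real.exp (-(s : ℝ) - 2))
    (hηH : ∀ x ∈ Set.univ.pi fun _ : Fin d => Set.Ioo (-b) b,
      ∀ j, ∃ s : ℕ, η x j = Real.exp (-(s : ℝ) - 2))
    (hh : ∑' s : Fin d → ℕ,
        (volume {x : Fin d → ℝ | x ∈ (Set.univ.pi fun _ : Fin d => Set.Ioo (-b) b) ∧
          ∀ j, h x j = Real.exp (-(s j : ℝ) - 2)}) ^ κ ≤ ENNReal.ofReal 𝔏)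
    (hη : ∑' s : Fin d → ℕ,
        (volume {x : Fin d → ℝ | x ∈ (Set.univ.pi fun _ : Fin d => Set.Ioo (-b) b) ∧
          ∀ j, η x j = Real.exp (-(s j : ℝ) - 2)}) ^ κ ≤ ENNReal.ofReal 𝔏) :
    ∑' s : Fin d → ℕ,
        (volume {x : Fin d → ℝ | x ∈ (Set.univ.pi fun _ : Fin d => Set.Ioo (-b) b) ∧
          ∀ j, max (h x j) (η x j) = Real.exp (-(s j : ℝ) - 2)}) ^ ((d : ℝ) * κ)
      ≤ ENNReal.ofReal ((2 * 𝔏) ^ d) := by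
  obtain ⟨hκ0, hκd⟩ := hκ
  have hκ1 : κ ≤ 1 := hκd.le.trans (by simpa using Nat.cast_inv_le_one d)
  have he : Function.Injective fun t : ℕ => Real.exp (-(t : ℝ) - 2) := fun s t hst => by
    have := Real.exp_injective hst
    exact_mod_cast (by linarith : (s : ℝ) = t)
  have := tsum_measure_levelSet_max_rpow_le volume he hhH hηH hκ0 hκ1 hh hη
  rwa [Fintype.card_fin, ← ENNReal.ofReal_add h𝔏.le h𝔏.le, ← ENNReal.ofReal_pow (by linarith),
    ← two_mul] at this

/-- If the bandwidth functions `h, η` (taking values in `H^d`, `H = {e^{−s−2}}`)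
both belong to `H_d(κ,𝔏)`, then the coordinatewise maximum `h ∨ η`
belongs to `H_d(dκ, (2𝔏)^d)`. -/
theorem stmt_4 (d : ℕ) (hd : 0 < d) (b κ 𝔏 : ℝ) (hb : 0 < b)
    (hκ : κ ∈ Set.Ioo (0 : ℝ) (1 / d)) (h𝔏 : 0 < 𝔏)
    (h η : (Fin d → ℝ) → Fin d → ℝ)
    (hhH : ∀ x ∈ Set.univ.pi fun _ : Fin d => Set.Ioo (-b) b,
      ∀ j, ∃ s : ℕ, h x j = Real.exp (-(s : ℝ) - 2))
    (hηH : ∀ x ∈ Set.univ.pi fun _ : Fin d => Set.Ioo (-b) b,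
      ∀ j, ∃ s : ℕ, η x j = Real.exp (-(s : ℝ) - 2))
    (hh : ∑' s : Fin d → ℕ,
        (volume {x : Fin d → ℝ | x ∈ (Set.univ.pi fun _ : Fin d => Set.Ioo (-b) b) ∧
          ∀ j, h x j = Real.exp (-(s j : ℝ) - 2)}) ^ κ ≤ ENNReal.ofReal 𝔏)
    (hη : ∑' s : Fin d → ℕ,
        (volume {x : Fin d → ℝ | x ∈ (Set.univ.pi fun _ : Fin d => Set.Ioo (-b) b) ∧
          ∀ j, η x j = Real.exp (-(s j : ℝ) - 2)}) ^ κ ≤ ENNReal.ofReal 𝔏) :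
    ∑' s : Fin d → ℕ,
        (volume {x : Fin d → ℝ | x ∈ (Set.univ.pi fun _ : Fin d => Set.Ioo (-b) b) ∧
          ∀ j, max (h x j) (η x j) = Real.exp (-(s j : ℝ) - 2)}) ^ ((d : ℝ) * κ)
      ≤ ENNReal.ofReal ((2 * 𝔏) ^ d) :=
  stmt_4_general d b κ 𝔏 hκ h𝔏 h η hhH hηH hh hη
end

section
/- Setting 1/γ = Σ_j 1/γ_j and γ_j = β_j τ(s)/τ(r_j) (for those j with r_j ≤ s, and γ_j = β_j otherwise), with τ(u) = 1 − 1/ω + 1/(uβ), 1/ω = Σ_j 1/(β_j r_j), 1/β = Σ_j 1/β_j, and 1/υ = Σ_j 1/(γ_j q_j) with q_j = s for r_j ≤ s and q_j = ∞ otherwise, one has the identity 1/ω − 1/υ = β(1/γ − 1/β)(1 − 1/ω). -/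
/-! Expanding `τ(r_j) = (1 - 1/ω) + (1/β)/r_j` gives `τ(s) ∑_{J_±} 1/γ_j = (1 - 1/ω) ∑_{J_±} 1/β_j + (1/β)(1/ω)`,
and the claimed identity is this relation rearranged, using `∑_{J_∞} 1/β_j = 1/β - ∑_{J_±} 1/β_j`. -/

open Finset

theorem Finset.sum_add_div_div_mul {ι K : Type*} [Field K] (J : Finset ι) (a b t : K)
    (β r : ι → K) :
    ∑ j ∈ J, (a + b / r j) / (t * β j) =
      t⁻¹ * (a * ∑ j ∈ J, 1 / β j + b * ∑ j ∈ J, 1 / (β j * r j)) := by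
  simp only [mul_sum, ← sum_add_distrib]
  exact sum_congr rfl fun j _ => by ring

theorem sub_div_eq_inv_mul_sub_mul {K : Type*} [Field K] (invω invβ B A s : K)
    (hinvβ : invβ ≠ 0) (hA : A * (1 - invω + invβ / s) = (1 - invω) * B + invβ * invω) :
    invω - A / s = invβ⁻¹ * (A + (invβ - B) - invβ) * (1 - invω) := by
  linear_combination (-invβ⁻¹) * hA + (A / s - invω) * inv_mul_cancel₀ hinvβ

theorem stmt_9_general (d : ℕ) (hd : 0 < d) (β rr : Fin d → ℝ) (J : Finset (Fin d))
    (s : ℝ)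
    (hβ : ∀ j, 0 < β j)
    (invω invβ invγ invυ : ℝ)
    (hinvω : invω = ∑ j ∈ J, 1 / (β j * rr j))
    (hinvβ : invβ = ∑ j, 1 / β j)
    (hτs : 0 < 1 - invω + invβ / s)
    (hinvγ : invγ = (∑ j ∈ J, (1 - invω + invβ / rr j) / ((1 - invω + invβ / s) * β j))
        + ∑ j ∈ Jᶜ, 1 / β j)
    (hinvυ : invυ = (∑ j ∈ J, (1 - invω + invβ / rr j) / ((1 - invω + invβ / s) * β j)) / s) :
    invω - invυ = invβ⁻¹ * (invγ - invβ) * (1 - invω) := by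
  have hinvβ_pos : 0 < invβ := hinvβ ▸
    sum_pos (fun j _ => one_div_pos.2 (hβ j)) (univ_nonempty_iff.2 ⟨⟨0, hd⟩⟩)
  have hcompl : ∑ j ∈ Jᶜ, 1 / β j = invβ - ∑ j ∈ J, 1 / β j := by
    rw [hinvβ, ← sum_add_sum_compl J]
    ring
  rw [hinvγ, hinvυ, hcompl]
  apply sub_div_eq_inv_mul_sub_mul _ _ _ _ _ hinvβ_pos.ne'
  rw [sum_add_div_div_mul, ← hinvω, mul_right_comm, inv_mul_cancel₀ hτs.ne', one_mul]

/-- The algebraic identity `1/ω − 1/υ = β(1/γ − 1/β)(1 − 1/ω)` relating the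
anisotropy quantities, where `1/γ_j = τ(r_j)/(τ(s)β_j)` for `j ∈ J_±`
(`τ(u) = 1 − 1/ω + 1/(uβ)`, i.e. `1 − invω + invβ/u`), `1/γ_j = 1/β_j`
otherwise, and `1/υ = Σ_{j∈J_±} 1/(γ_j s)`. -/
theorem stmt_9 (d : ℕ) (hd : 0 < d) (β rr : Fin d → ℝ) (J : Finset (Fin d))
    (s : ℝ) (hs : 1 ≤ s)
    (hβ : ∀ j, 0 < β j) (hr : ∀ j ∈ J, 1 ≤ rr j) (hrs : ∀ j ∈ J, rr j ≤ s)
    (invω invβ invγ invυ : ℝ)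
    (hinvω : invω = ∑ j ∈ J, 1 / (β j * rr j))
    (hinvβ : invβ = ∑ j, 1 / β j)
    (hτs : 0 < 1 - invω + invβ / s)
    (hinvγ : invγ = (∑ j ∈ J, (1 - invω + invβ / rr j) / ((1 - invω + invβ / s) * β j))
        + ∑ j ∈ Jᶜ, 1 / β j)
    (hinvυ : invυ = (∑ j ∈ J, (1 - invω + invβ / rr j) / ((1 - invω + invβ / s) * β j)) / s) :
    invω - invυ = invβ⁻¹ * (invγ - invβ) * (1 - invω) :=
  stmt_9_general d hd β rr J s hβ invω invβ invγ invυ hinvω hinvβ hτs hinvγ hinvυ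
end

section
/- Varshamov–Gilbert type bound: for any integers m ≥ 4 and n with n/m ≥ 2, there exists a subset P of {0,1}^n such that every element a ∈ P has exactly m nonzero coordinates (Σ_k a_k = m), any two distinct elements a, a′ ∈ P satisfy Hamming distance ρ(a,a′) ≥ m/2, and |P| ≥ 2^{−m}(n/m − 1)^{m/2}. -/
/-!
Write `q = ⌊n/m⌋` and take a word `f : Fin m → Fin q`. Its graph `{(i, f i)}` is a set of `m`
cells in the `m × q` grid, which fits into `Fin n`, and the graphs of `f` and `g` differ in
exactly `2 · d(f, g)` cells. So it suffices to find a `q`-ary code of length `m` and minimum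
distance `> (m - 1)/4`. A maximal such code covers `(Fin q)^m` by Hamming balls of radius
`(m - 1)/4`, each of size at most `2^m q^((m-1)/4)` (a support set and the values on it), which
gives at least `2^{-m} q^{m/2}` codewords, and `q ≥ n/m - 1`.
-/

open Finset

section HammingBall

variable {ι κ : Type*} [Fintype ι] [DecidableEq ι] [Fintype κ] [DecidableEq κ]

theorem card_hammingBall_le [Nonempty κ] (c : ι → κ) (r : ℕ) :
    #{g | hammingDist g c ≤ r} ≤ 2 ^ Fintype.card ι * Fintype.card κ ^ r := by
  set supports : Finset (Finset ι) := {S | #S ≤ r}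
  set box : Finset ι → Finset (ι → κ) :=
    fun S => Fintype.piFinset fun i => if i ∈ S then univ else {c i}
  have hcover : ({g | hammingDist g c ≤ r} : Finset (ι → κ)) ⊆ supports.biUnion box := by
    intro g hg
    refine mem_biUnion.2
      ⟨({i | g i ≠ c i} : Finset ι), by simpa [supports, hammingDist] using hg, ?_⟩
    simp only [box, Fintype.mem_piFinset]
    intro i
    split_ifs with hi
    · exact mem_univ _
    · simpa using hi
  have hbox : ∀ S ∈ supports, #(box S) ≤ Fintype.card κ ^ r := fun S hS => by
    have : #(box S) = Fintype.card κ ^ #S := by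
      simp [box, Fintype.card_piFinset, apply_ite, prod_ite_mem]
    rw [this]
    exact Nat.pow_le_pow_right Fintype.card_pos (mem_filter.1 hS).2
  calc #{g | hammingDist g c ≤ r}
      ≤ ∑ S ∈ supports, #(box S) := (card_le_card hcover).trans card_biUnion_le
    _ ≤ ∑ S ∈ supports, Fintype.card κ ^ r := sum_le_sum hbox
    _ ≤ 2 ^ Fintype.card ι * Fintype.card κ ^ r := by
        rw [sum_const, smul_eq_mul]
        gcongr
        simpa using card_le_univ supports

theorem exists_maximal_hammingSeparated (r : ℕ) :
    ∃ C : Finset (ι → κ), (C : Set (ι → κ)).Pairwise (fun f g => r < hammingDist f g) ∧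
      ∀ g, ∃ c ∈ C, hammingDist g c ≤ r := by
  obtain ⟨C, hC, hmax⟩ := exists_max_image
    ({C | (C : Set (ι → κ)).Pairwise fun f g => r < hammingDist f g} : Finset (Finset (ι → κ)))
    card ⟨∅, by simp⟩
  rw [mem_filter] at hC
  refine ⟨C, hC.2, fun g => ?_⟩
  by_contra! hfar
  have hg : g ∉ C := fun hg => by simpa using hfar g hg
  have hsep : ((insert g C : Finset (ι → κ)) : Set (ι → κ)).Pairwise
      fun f g => r < hammingDist f g := by
    rw [coe_insert]
    exact hC.2.insert fun c hc _ => ⟨hfar c hc, hammingDist_comm g c ▸ hfar c hc⟩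
  have := hmax _ (mem_filter.2 ⟨mem_univ _, hsep⟩)
  rw [card_insert_of_notMem hg] at this
  omega

theorem exists_hammingSeparated_card_mul_ge [Nonempty κ] (r : ℕ) :
    ∃ C : Finset (ι → κ), (C : Set (ι → κ)).Pairwise (fun f g => r < hammingDist f g) ∧
      Fintype.card κ ^ Fintype.card ι ≤ #C * (2 ^ Fintype.card ι * Fintype.card κ ^ r) := by
  obtain ⟨C, hsep, hcover⟩ := exists_maximal_hammingSeparated (ι := ι) (κ := κ) r
  refine ⟨C, hsep, ?_⟩
  calc Fintype.card κ ^ Fintype.card ι = #(univ : Finset (ι → κ)) := by simp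
    _ ≤ #(C.biUnion fun c => ({g | hammingDist g c ≤ r} : Finset (ι → κ))) :=
        card_le_card fun g _ => by simpa using hcover g
    _ ≤ ∑ c ∈ C, #({g | hammingDist g c ≤ r} : Finset (ι → κ)) := card_biUnion_le
    _ ≤ #C * (2 ^ Fintype.card ι * Fintype.card κ ^ r) := by
        simpa using sum_le_sum fun c (_ : c ∈ C) => card_hammingBall_le c r

end HammingBall

section ExtendByConstant

variable {α β γ : Type*} [Fintype α] [Fintype β] (e : α ↪ β)

theorem card_filter_of_subset_range (p : β → Prop) [DecidablePred p]
    (hp : ∀ b ∉ Set.range e, ¬ p b) : #{b | p b} = #{a | p (e a)} := by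
  rw [← card_map e]
  congr 1
  ext b
  simp only [mem_filter, mem_univ, true_and, mem_map]
  refine ⟨fun hb => ?_, fun ⟨a, ha, hab⟩ => hab ▸ ha⟩
  by_cases hbe : b ∈ Set.range e
  · obtain ⟨a, rfl⟩ := hbe
    exact ⟨a, hb, rfl⟩
  · exact absurd hb (hp b hbe)

theorem card_filter_extend (a : α → γ) (z : γ) (p : γ → Prop) [DecidablePred p] (hz : ¬ p z) :
    #{b | p (Function.extend e a (fun _ => z) b)} = #{i | p (a i)} := by
  rw [card_filter_of_subset_range e _ fun b hb => by
    rwa [Function.extend_apply' _ _ _ hb]]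
  simp only [e.injective.extend_apply]

theorem hammingDist_extend [DecidableEq γ] (a a' : α → γ) (z : γ) :
    hammingDist (Function.extend e a fun _ => z) (Function.extend e a' fun _ => z) =
      hammingDist a a' := by
  rw [hammingDist, card_filter_of_subset_range e _ fun b hb => by
    rw [Function.extend_apply' _ _ _ hb, Function.extend_apply' _ _ _ hb]; exact not_not.2 rfl]
  simp only [e.injective.extend_apply, hammingDist]

end ExtendByConstant

section GraphWord

variable {ι κ β : Type*} [Fintype ι] [Fintype κ] [DecidableEq κ]

def graphIndicator (f : ι → κ) (p : ι × κ) : Bool := decide (f p.1 = p.2)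

theorem card_graphIndicator_eq_true (f : ι → κ) :
    #{p | graphIndicator f p = true} = Fintype.card ι := by
  rw [card_filter, Fintype.sum_prod_type]
  simp [graphIndicator]

theorem card_filter_decide_eq_ne (x y : κ) :
    #{c | decide (x = c) ≠ decide (y = c)} = if x = y then 0 else 2 := by
  split_ifs with h
  · simp [h]
  · rw [← card_pair h]
    congr 1
    ext c
    by_cases hx : x = c <;> by_cases hy : y = c <;> simp_all [eq_comm]

theorem hammingDist_graphIndicator (f g : ι → κ) :
    hammingDist (graphIndicator f) (graphIndicator g) = 2 * hammingDist f g := by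
  rw [hammingDist, card_filter, Fintype.sum_prod_type, hammingDist, card_filter, mul_sum]
  refine sum_congr rfl fun i _ => ?_
  rw [← card_filter]
  exact (card_filter_decide_eq_ne (f i) (g i)).trans (by split_ifs <;> simp_all)

noncomputable def graphWord (e : ι × κ ↪ β) (f : ι → κ) : β → Bool :=
  Function.extend e (graphIndicator f) fun _ => false

variable [Fintype β] (e : ι × κ ↪ β)

theorem card_graphWord_eq_true (f : ι → κ) : #{b | graphWord e f b = true} = Fintype.card ι := by
  rw [graphWord, card_filter_extend e _ false (· = true) Bool.false_ne_true,
    card_graphIndicator_eq_true]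

theorem hammingDist_graphWord (f g : ι → κ) :
    hammingDist (graphWord e f) (graphWord e g) = 2 * hammingDist f g := by
  rw [graphWord, graphWord, hammingDist_extend, hammingDist_graphIndicator]

theorem graphWord_injective : Function.Injective (graphWord e : (ι → κ) → β → Bool) :=
  fun f g h => by simpa [h] using hammingDist_graphWord e f g

end GraphWord

theorem Nat.cast_div_sub_one_le {K : Type*} [Field K] [LinearOrder K] [IsStrictOrderedRing K]
    [FloorSemiring K] (n m : ℕ) : (n : K) / m - 1 ≤ ((n / m : ℕ) : K) := by
  have := Nat.lt_floor_add_one ((n : K) / m)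
  rw [Nat.floor_div_eq_div] at this
  linarith

theorem two_rpow_neg_mul_rpow_half_le {x q N : ℝ} {m r : ℕ} (hx : 0 ≤ x) (hxq : x ≤ q)
    (hq : 1 ≤ q) (hr : 2 * r ≤ m) (hN : q ^ m ≤ N * (2 ^ m * q ^ r)) :
    2 ^ (-(m : ℝ)) * x ^ ((m : ℝ) / 2) ≤ N := by
  have hxpow : x ^ ((m : ℝ) / 2) ≤ q ^ (m - r) := calc
    x ^ ((m : ℝ) / 2) ≤ q ^ ((m : ℝ) / 2) := Real.rpow_le_rpow hx hxq (by positivity)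
    _ ≤ q ^ ((m - r : ℕ) : ℝ) := by
      refine Real.rpow_le_rpow_of_exponent_le hq ?_
      rw [Nat.cast_sub (by omega)]
      linarith [(Nat.cast_le (α := ℝ)).2 hr, show ((2 * r : ℕ) : ℝ) = 2 * r by push_cast; ring]
    _ = q ^ (m - r) := Real.rpow_natCast q (m - r)
  have hqpow : q ^ (m - r) ≤ 2 ^ m * N := by
    refine le_of_mul_le_mul_right (a := q ^ r) ?_ (by positivity)
    rw [← pow_add, Nat.sub_add_cancel (by omega), mul_assoc, mul_left_comm]
    exact hN
  rw [Real.rpow_neg zero_le_two, Real.rpow_natCast, inv_mul_le_iff₀ (by positivity)]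
  linarith

/-- Varshamov–Gilbert type bound: for integers `m ≥ 4` and `n ≥ 2m` there exists
a set `P ⊆ {0,1}^n` of binary vectors of exact weight `m`, pairwise at Hamming
distance at least `m/2`, with `|P| ≥ 2^{−m}(n/m − 1)^{m/2}`. -/
theorem stmt_13 (m n : ℕ) (hm : 4 ≤ m) (hn : 2 * m ≤ n) :
    ∃ P : Finset (Fin n → Bool),
      (∀ a ∈ P, (Finset.univ.filter fun k => a k = true).card = m) ∧
      (∀ a ∈ P, ∀ a' ∈ P, a ≠ a' →
        (m : ℝ) / 2 ≤ ((Finset.univ.filter fun j => a j ≠ a' j).card : ℝ)) ∧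
      (2 : ℝ) ^ (-(m : ℝ)) * ((n : ℝ) / m - 1) ^ ((m : ℝ) / 2) ≤ (P.card : ℝ) := by
  have hm0 : 0 < m := by omega
  have hq : 2 ≤ n / m := (Nat.le_div_iff_mul_le hm0).2 (by omega)
  have : NeZero (n / m) := ⟨by omega⟩
  set e : Fin m × Fin (n / m) ↪ Fin n :=
    finProdFinEquiv.toEmbedding.trans (Fin.castLEEmb (Nat.mul_div_le n m))
  obtain ⟨C, hsep, hcard⟩ :=
    exists_hammingSeparated_card_mul_ge (ι := Fin m) (κ := Fin (n / m)) ((m - 1) / 4)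
  refine ⟨C.image (graphWord e), ?_, ?_, ?_⟩
  · simp only [forall_mem_image, card_graphWord_eq_true, Fintype.card_fin, implies_true]
  · simp only [mem_image]
    rintro _ ⟨f, hf, rfl⟩ _ ⟨g, hg, rfl⟩ hne
    have hfg := hsep hf hg fun h => hne (h ▸ rfl)
    have : m ≤ hammingDist (graphWord e f) (graphWord e g) * 2 := by
      rw [hammingDist_graphWord]; omega
    change (m : ℝ) / 2 ≤ (hammingDist (graphWord e f) (graphWord e g) : ℝ)
    rw [div_le_iff₀ two_pos]
    exact_mod_cast this
  · rw [card_image_of_injective _ (graphWord_injective e)]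
    refine two_rpow_neg_mul_rpow_half_le (r := (m - 1) / 4) ?_ (Nat.cast_div_sub_one_le n m)
      (by exact_mod_cast hq.trans' one_le_two) (by omega) ?_
    · rw [sub_nonneg, le_div_iff₀ (by positivity), one_mul]
      exact_mod_cast (by omega : m ≤ n)
    · simpa using (Nat.cast_le (α := ℝ)).2 hcard
end
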